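/- Let X, Y be Banach spaces with Y compactly embedded in X, and let {U_σ(t,s)}_{σ∈Σ} be a system of evolution processes on X. Let 𝓑 ⊆ X be a closed bounded set with 𝓑 ⊆ B_X(x₀, R) for some x₀ ∈ 𝓑 and R > 0, and let τ > 0 satisfy U_σ(t,0)𝓑 ⊆ 𝓑 for all t ≥ τ, σ ∈ Σ. Assume uniform smoothing with constant κ = κ(τ): sup_{σ∈Σ} ‖U_σ(τ,0)x − U_σ(τ,0)y‖_Y ≤ κ‖x−y‖_X for all x,y ∈ 𝓑. Let ψ ∈ Σ and suppose {U_ψ(t,s)} has a pullback attractor {A(t)}_{t∈ℝ} with ⋃_{t∈ℝ}A(t) ⊆ 𝓑. Fix ν ∈ (0,1) and let N be the minimal number of open balls of radius ν/(2κ) in X needed to cover the closed unit ball of Y. Then for every i ∈ ℤ and every n ∈ ℕ, N_X(A(iτ), Rν^n) ≤ N^n. -/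
import Mathlib


open Filter Set Metric Bornology
open scoped ENNReal NNReal Topology

noncomputable def coverN {X : Type*} [MetricSpace X] (K : Set X) (r : ℝ) : ℝ≥0∞ :=
  sInf {n : ℝ≥0∞ | ∃ s : Finset X, (s.card : ℝ≥0∞) = n ∧ K ⊆ ⋃ x ∈ s, Metric.ball x r}

noncomputable def dimBox {X : Type*} [MetricSpace X] (K : Set X) : ℝ≥0∞ :=
  Filter.limsup (fun r : ℝ =>
    if coverN K r = ⊤ then (⊤ : ℝ≥0∞)
    else ENNReal.ofReal (Real.log (coverN K r).toReal / (-Real.log r)))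
    (nhdsWithin 0 (Set.Ioi 0))

structure EvolSystem (X : Type*) (Ξ : Type*) [MetricSpace X] [MetricSpace Ξ] where
  th : ℝ → Ξ → Ξ
  th_cont : ∀ t, Continuous (th t)
  th_zero : th 0 = id
  th_add : ∀ t s, th t ∘ th s = th (t + s)
  Sg : Set Ξ
  Sg_compact : IsCompact Sg
  Sg_inv : ∀ t, th t '' Sg = Sg
  U : Ξ → ℝ → ℝ → X → X
  U_cont : ∀ σ ∈ Sg, ∀ t s : ℝ, s ≤ t → Continuous (U σ t s)
  U_id : ∀ σ ∈ Sg, ∀ s : ℝ, U σ s s = id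
  U_comp : ∀ σ ∈ Sg, ∀ t s r : ℝ, r ≤ s → s ≤ t → U σ t s ∘ U σ s r = U σ t r
  U_jointCont : ∀ σ ∈ Sg, ∀ x : X,
    ContinuousOn (fun p : ℝ × ℝ => U σ p.1 p.2 x) {p : ℝ × ℝ | p.2 ≤ p.1}
  translation : ∀ σ ∈ Sg, ∀ h t s : ℝ, s ≤ t → U (th h σ) t s = U σ (t + h) (s + h)


lemma coverN_le {X : Type*} [MetricSpace X] {K : Set X} {r : ℝ} (s : Finset X)
    (h : K ⊆ ⋃ x ∈ s, Metric.ball x r) : coverN K r ≤ s.card :=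
  sInf_le ⟨s, rfl, h⟩

lemma coverN_exists {X : Type*} [MetricSpace X] {K : Set X} {r : ℝ}
    (h : coverN K r ≠ ⊤) :
    ∃ s : Finset X, (s.card : ℝ≥0∞) = coverN K r ∧ K ⊆ ⋃ x ∈ s, Metric.ball x r := by
  classical
  set T : Set ℕ := {k : ℕ | ∃ s : Finset X, s.card = k ∧ K ⊆ ⋃ x ∈ s, Metric.ball x r} with hT
  have hTne : T.Nonempty := by
    by_contra hc
    apply h
    rw [coverN]
    rw [sInf_eq_top]
    rintro a ⟨s, hs, hcov⟩
    exact absurd ⟨s.card, s, rfl, hcov⟩ hc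
  obtain ⟨s, hscard, hscov⟩ := Nat.sInf_mem hTne
  refine ⟨s, ?_, hscov⟩
  apply le_antisymm
  · apply le_sInf
    rintro a ⟨s', rfl, hcov'⟩
    exact_mod_cast Nat.cast_le.mpr (hscard ▸ Nat.sInf_le (⟨s', rfl, hcov'⟩ : s'.card ∈ T))
  · exact sInf_le ⟨s, rfl, hscov⟩

def IsPullbackAttractor {X : Type*} [MetricSpace X] (U : ℝ → ℝ → X → X) (A : ℝ → Set X) : Prop :=
  (∀ t, IsCompact (A t)) ∧ Bornology.IsBounded (⋃ t : ℝ, A t) ∧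
  (∀ t s : ℝ, s ≤ t → U t s '' A s = A t) ∧
  (∀ B : Set X, Bornology.IsBounded B → ∀ t : ℝ, ∀ ε > 0, ∃ s₀ ≤ t, ∀ s ≤ s₀,
     ∀ x ∈ B, Metric.infDist (U t s x) (A t) ≤ ε)

/-- covering estimate for the sections of the pullback attractor: under uniform
smoothing, `N_X(A(iτ), Rν^n) ≤ N^n` for every `i ∈ ℤ` and `n ∈ ℕ`. -/
theorem statement9
    {X Y Ξ : Type*} [NormedAddCommGroup X] [NormedSpace ℝ X] [CompleteSpace X]
    [NormedAddCommGroup Y] [NormedSpace ℝ Y] [CompleteSpace Y] [MetricSpace Ξ]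
    (e : Y →L[ℝ] X) (he_inj : Function.Injective e)
    (he_cpt : IsCompact (closure (⇑e '' Metric.closedBall 0 1)))
    (sys : EvolSystem X Ξ)
    (𝓑 : Set X) (h𝓑closed : IsClosed 𝓑) (h𝓑bdd : Bornology.IsBounded 𝓑)
    (x₀ : X) (hx₀ : x₀ ∈ 𝓑) (R : ℝ) (hR : 0 < R) (h𝓑ball : 𝓑 ⊆ Metric.ball x₀ R)
    (τ : ℝ) (hτ : 0 < τ)
    (hSelfAbs : ∀ t ≥ τ, ∀ σ ∈ sys.Sg, sys.U σ t 0 '' 𝓑 ⊆ 𝓑)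
    -- uniform smoothing at time `τ` with constant `κ`
    (κ : ℝ) (hκ : 0 < κ)
    (hH2 : ∀ σ ∈ sys.Sg, ∀ x ∈ 𝓑, ∀ y ∈ 𝓑,
      ∃ w : Y, e w = sys.U σ τ 0 x - sys.U σ τ 0 y ∧ ‖w‖ ≤ κ * ‖x - y‖)
    -- `ψ ∈ Σ` and its pullback attractor is contained in `𝓑`
    (ψ : Ξ) (hψ : ψ ∈ sys.Sg)
    (A : ℝ → Set X) (hA : IsPullbackAttractor (sys.U ψ) A)
    (hA𝓑 : (⋃ t : ℝ, A t) ⊆ 𝓑)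
    (ν : ℝ) (hν : ν ∈ Set.Ioo (0:ℝ) 1) :
    ∀ i : ℤ, ∀ n : ℕ,
      coverN (A (i * τ)) (R * ν ^ n) ≤
        (coverN (⇑e '' Metric.closedBall 0 1) (ν / (2 * κ))) ^ n := by
  classical
  obtain ⟨hν0, hν1⟩ := hν
  set N := coverN (⇑e '' Metric.closedBall 0 1) (ν / (2 * κ)) with hNdef
  have hr2 : 0 < ν / (2 * κ) := div_pos hν0 (by positivity)
  have hNtop : N ≠ ⊤ := by
    obtain ⟨t, -, htfin, htcov⟩ := he_cpt.finite_cover_balls hr2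
    have hsub : ⇑e '' Metric.closedBall 0 1 ⊆ ⋃ x ∈ htfin.toFinset, Metric.ball x (ν / (2 * κ)) := by
      refine subset_closure.trans (htcov.trans ?_)
      simp [Set.Finite.mem_toFinset]
    exact ne_top_of_le_ne_top (ENNReal.natCast_ne_top _) (coverN_le _ hsub)
  obtain ⟨t, htcard, htcov⟩ := coverN_exists hNtop
  have hAsub : ∀ r : ℝ, A r ⊆ 𝓑 := fun r => (Set.subset_iUnion A r).trans hA𝓑
  intro i n
  induction n generalizing i with
  | zero =>
    have hcov : A ((i : ℝ) * τ) ⊆ ⋃ x ∈ ({x₀} : Finset X), Metric.ball x (R * ν ^ 0) := by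
      intro a ha
      simp only [Finset.mem_singleton, Set.mem_iUnion, exists_prop]
      exact ⟨x₀, rfl, by simpa using h𝓑ball (hAsub _ ha)⟩
    have := coverN_le _ hcov
    simpa using this
  | succ n ih =>
    set σ := sys.th (((i - 1 : ℤ) : ℝ) * τ) ψ with hσdef
    have hσSg : σ ∈ sys.Sg := by
      rw [hσdef, ← sys.Sg_inv (((i - 1 : ℤ) : ℝ) * τ)]
      exact ⟨ψ, hψ, rfl⟩
    have hUtr : sys.U σ τ 0 = sys.U ψ ((i : ℝ) * τ) (((i - 1 : ℤ) : ℝ) * τ) := by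
      rw [hσdef, sys.translation ψ hψ (((i - 1 : ℤ) : ℝ) * τ) τ 0 hτ.le]
      congr 1 <;> push_cast <;> ring
    have hle : ((i - 1 : ℤ) : ℝ) * τ ≤ (i : ℝ) * τ := by
      apply mul_le_mul_of_nonneg_right _ hτ.le
      push_cast; linarith
    have hAinv : sys.U σ τ 0 '' A (((i - 1 : ℤ) : ℝ) * τ) = A ((i : ℝ) * τ) := by
      rw [hUtr]; exact hA.2.2.1 _ _ hle
    have hprev : coverN (A (((i - 1 : ℤ) : ℝ) * τ)) (R * ν ^ n) ≤ N ^ n := ih (i - 1)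
    have hprevtop : coverN (A (((i - 1 : ℤ) : ℝ) * τ)) (R * ν ^ n) ≠ ⊤ :=
      ne_top_of_le_ne_top (ENNReal.pow_ne_top hNtop) hprev
    obtain ⟨s, hscard, hscov⟩ := coverN_exists hprevtop
    set c : ℝ := 2 * κ * (R * ν ^ n) with hcdef
    have hc : 0 < c := by positivity
    set pt : X → X := fun x =>
      if h : (A (((i - 1 : ℤ) : ℝ) * τ) ∩ Metric.ball x (R * ν ^ n)).Nonempty then h.choose
      else x₀ with hptdef
    have hpt : ∀ x, (A (((i - 1 : ℤ) : ℝ) * τ) ∩ Metric.ball x (R * ν ^ n)).Nonempty →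
        pt x ∈ A (((i - 1 : ℤ) : ℝ) * τ) ∩ Metric.ball x (R * ν ^ n) := by
      intro x hne
      simp only [hptdef, dif_pos hne]
      exact hne.choose_spec
    set F : X × X → X := fun p => sys.U σ τ 0 (pt p.1) + c • p.2 with hFdef
    set s' : Finset X := (s ×ˢ t).image F with hs'def
    have hcov : A ((i : ℝ) * τ) ⊆ ⋃ x ∈ s', Metric.ball x (R * ν ^ (n + 1)) := by
      intro p hp
      rw [← hAinv] at hp
      obtain ⟨a, ha, rfl⟩ := hp
      have haB : a ∈ 𝓑 := hAsub _ ha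
      obtain ⟨xj, hxj, haxj⟩ := by
        have := hscov ha
        simpa only [Set.mem_iUnion, exists_prop] using this
      have hne : (A (((i - 1 : ℤ) : ℝ) * τ) ∩ Metric.ball xj (R * ν ^ n)).Nonempty :=
        ⟨a, ha, haxj⟩
      obtain ⟨hajA, hajball⟩ := hpt xj hne
      have hajB : pt xj ∈ 𝓑 := hAsub _ hajA
      obtain ⟨w, hw, hwn⟩ := hH2 σ hσSg a haB (pt xj) hajB
      have hdist : ‖a - pt xj‖ ≤ 2 * (R * ν ^ n) := by
        have h1 : dist a xj < R * ν ^ n := haxj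
        have h2 : dist (pt xj) xj < R * ν ^ n := hajball
        calc ‖a - pt xj‖ = dist a (pt xj) := (dist_eq_norm a (pt xj)).symm
          _ ≤ dist a xj + dist (pt xj) xj := dist_triangle_right a (pt xj) xj
          _ ≤ 2 * (R * ν ^ n) := by linarith
      have hwle : ‖w‖ ≤ c := by
        calc ‖w‖ ≤ κ * ‖a - pt xj‖ := hwn
          _ ≤ κ * (2 * (R * ν ^ n)) := by nlinarith
          _ = c := by rw [hcdef]; ring
      have hmem : (c⁻¹ • w) ∈ Metric.closedBall (0 : Y) 1 := by
        rw [Metric.mem_closedBall, dist_zero_right, norm_smul, norm_inv, Real.norm_eq_abs,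
          abs_of_pos hc]
        rw [inv_mul_le_iff₀ hc]
        linarith
      have : e (c⁻¹ • w) ∈ ⋃ y ∈ t, Metric.ball y (ν / (2 * κ)) := htcov ⟨_, hmem, rfl⟩
      obtain ⟨yk, hyk, hball⟩ := by simpa only [Set.mem_iUnion, exists_prop] using this
      refine Set.mem_iUnion₂.2 ⟨F (xj, yk), ?_, ?_⟩
      · exact Finset.mem_image.2 ⟨(xj, yk), Finset.mem_product.2 ⟨hxj, hyk⟩, rfl⟩
      · rw [Metric.mem_ball, dist_eq_norm]
        have heq : sys.U σ τ 0 a - F (xj, yk) = e w - c • yk := by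
          simp only [hFdef]
          rw [hw]; abel
        rw [heq]
        have heq2 : e w - c • yk = c • (e (c⁻¹ • w) - yk) := by
          rw [smul_sub, map_smul, smul_smul, mul_inv_cancel₀ hc.ne', one_smul]
        rw [heq2, norm_smul, Real.norm_eq_abs, abs_of_pos hc]
        have hlt : ‖e (c⁻¹ • w) - yk‖ < ν / (2 * κ) := by
          rwa [Metric.mem_ball, dist_eq_norm] at hball
        calc c * ‖e (c⁻¹ • w) - yk‖ < c * (ν / (2 * κ)) :=
              (mul_lt_mul_iff_right₀ hc).2 hlt
          _ = R * ν ^ (n + 1) := by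
              rw [hcdef]; field_simp; ring
    calc coverN (A ((i : ℝ) * τ)) (R * ν ^ (n + 1)) ≤ (s'.card : ℝ≥0∞) := coverN_le _ hcov
      _ ≤ ((s.card * t.card : ℕ) : ℝ≥0∞) := by
          exact_mod_cast Nat.cast_le.mpr ((Finset.card_image_le).trans_eq (Finset.card_product s t))
      _ = (s.card : ℝ≥0∞) * (t.card : ℝ≥0∞) := by push_cast; ring
      _ ≤ N ^ n * N := mul_le_mul' (hscard ▸ hprev) htcard.le
      _ = N ^ (n + 1) := (pow_succ N n).symm
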